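/- arXiv:2402.06837 — 4 statements merged into one kernel-verified Lean document; each statement's English description precedes it below -/
import Mathlib

section
/- Let H be a finite group and k a commutative unital ring in which the order |H| of H is invertible. Let V be a module over the group algebra k[H] (equivalently, a k-module equipped with a k-linear action of H) which is flat as a k-module. Then V is flat as a k[H]-module. -/
/-!
STATEMENT 0: Let H be a finite group and k a commutative unital ring in which |H| is
invertible.  Let V be a k[H]-module which is flat as a k-module.  Then V is flat as a
k[H]-module, where flatness of a module V over a (possibly noncommutative) k-algebra A
means: the functor M ↦ M ⊗_A V from right A-modules to k-modules preserves exact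
sequences.  (M ⊗_A V is the quotient of M ⊗_k V by the relations m·a ⊗ v = m ⊗ a·v; a
right A-module is encoded as a module over Aᵐᵒᵖ.)
-/

universe u v w x w'

section BalancedTensor

variable (k : Type u) [CommRing k] (A : Type v) [Ring A] [Algebra k A]

/-- The submodule of `M ⊗[k] V` of relations defining the balanced tensor product
`M ⊗[A] V` of a right `A`-module `M` and a left `A`-module `V`. -/
def balancedRel (M V : Type*) [AddCommGroup M] [Module k M] [Module Aᵐᵒᵖ M]
    [IsScalarTower k Aᵐᵒᵖ M] [AddCommGroup V] [Module k V] [Module A V]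
    [IsScalarTower k A V] : Submodule k (TensorProduct k M V) :=
  Submodule.span k {x | ∃ (a : A) (m : M) (v : V),
    x = (MulOpposite.op a • m) ⊗ₜ[k] v - m ⊗ₜ[k] (a • v)}

/-- The balanced tensor product `M ⊗[A] V` of a right `A`-module `M` and a left
`A`-module `V`, as a `k`-module. -/
def BalancedTensor (M V : Type*) [AddCommGroup M] [Module k M] [Module Aᵐᵒᵖ M]
    [IsScalarTower k Aᵐᵒᵖ M] [AddCommGroup V] [Module k V] [Module A V]
    [IsScalarTower k A V] : Type _ :=
  TensorProduct k M V ⧸ balancedRel k A M V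

noncomputable instance (M V : Type*) [AddCommGroup M] [Module k M] [Module Aᵐᵒᵖ M]
    [IsScalarTower k Aᵐᵒᵖ M] [AddCommGroup V] [Module k V] [Module A V]
    [IsScalarTower k A V] : AddCommGroup (BalancedTensor k A M V) :=
  inferInstanceAs (AddCommGroup (TensorProduct k M V ⧸ balancedRel k A M V))

noncomputable instance (M V : Type*) [AddCommGroup M] [Module k M] [Module Aᵐᵒᵖ M]
    [IsScalarTower k Aᵐᵒᵖ M] [AddCommGroup V] [Module k V] [Module A V]
    [IsScalarTower k A V] : Module k (BalancedTensor k A M V) :=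
  inferInstanceAs (Module k (TensorProduct k M V ⧸ balancedRel k A M V))

/-- The map `M ⊗[A] V → M' ⊗[A] V` induced by a map `f : M → M'` of right `A`-modules. -/
noncomputable def balancedMap {M M' : Type*} (V : Type*) [AddCommGroup M] [Module k M]
    [Module Aᵐᵒᵖ M] [IsScalarTower k Aᵐᵒᵖ M] [AddCommGroup M'] [Module k M']
    [Module Aᵐᵒᵖ M'] [IsScalarTower k Aᵐᵒᵖ M'] [AddCommGroup V] [Module k V]
    [Module A V] [IsScalarTower k A V] (f : M →ₗ[Aᵐᵒᵖ] M') :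
    BalancedTensor k A M V →ₗ[k] BalancedTensor k A M' V :=
  Submodule.mapQ (balancedRel k A M V) (balancedRel k A M' V)
    (LinearMap.rTensor V (f.restrictScalars k))
    (by
      unfold balancedRel
      rw [Submodule.span_le]
      rintro x ⟨a, m, v, rfl⟩
      rw [SetLike.mem_coe, Submodule.mem_comap, map_sub, LinearMap.rTensor_tmul,
        LinearMap.rTensor_tmul, LinearMap.coe_restrictScalars, map_smul]
      exact Submodule.subset_span ⟨a, f m, v, rfl⟩)

/-- A left `A`-module `V` is flat over `A` if the functor `M ↦ M ⊗[A] V` from right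
`A`-modules to `k`-modules preserves exact sequences. -/
def IsFlatOver (V : Type*) [AddCommGroup V] [Module k V] [Module A V]
    [IsScalarTower k A V] : Prop :=
  ∀ (M₁ M₂ M₃ : Type w) (_ : AddCommGroup M₁) (_ : Module k M₁) (_ : Module Aᵐᵒᵖ M₁)
    (_ : IsScalarTower k Aᵐᵒᵖ M₁) (_ : AddCommGroup M₂) (_ : Module k M₂)
    (_ : Module Aᵐᵒᵖ M₂) (_ : IsScalarTower k Aᵐᵒᵖ M₂) (_ : AddCommGroup M₃)
    (_ : Module k M₃) (_ : Module Aᵐᵒᵖ M₃) (_ : IsScalarTower k Aᵐᵒᵖ M₃)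
    (f : M₁ →ₗ[Aᵐᵒᵖ] M₂) (g : M₂ →ₗ[Aᵐᵒᵖ] M₃),
    Function.Exact f g → Function.Exact (balancedMap k A V f) (balancedMap k A V g)

end BalancedTensor

section Avg

variable (k : Type u) [CommRing k] (H : Type v) [Group H] [Fintype H]

variable {M : Type w} [AddCommGroup M] [Module k M] [Module (MonoidAlgebra k H)ᵐᵒᵖ M]
  [IsScalarTower k (MonoidAlgebra k H)ᵐᵒᵖ M]
variable (V : Type x) [AddCommGroup V] [Module k V] [Module (MonoidAlgebra k H) V]
  [IsScalarTower k (MonoidAlgebra k H) V]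

set_option linter.unusedSectionVars false

/-- right multiplication by `single h 1` as a `k`-linear map on a right module. -/
noncomputable def actM (h : H) : M →ₗ[k] M where
  toFun m := MulOpposite.op (MonoidAlgebra.single h (1 : k) : MonoidAlgebra k H) • m
  map_add' := smul_add _
  map_smul' c m := (smul_comm c _ m).symm

/-- left multiplication by `single h 1` as a `k`-linear map. -/
noncomputable def actV (h : H) : V →ₗ[k] V where
  toFun v := (MonoidAlgebra.single h (1 : k) : MonoidAlgebra k H) • v
  map_add' := smul_add _
  map_smul' c v := (smul_comm c _ v).symm

noncomputable def sigma (h : H) :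
    TensorProduct k M V →ₗ[k] TensorProduct k M V :=
  TensorProduct.map (actM k H h) (actV k H V h⁻¹)

lemma single_mul_single' (g h : H) :
    (MonoidAlgebra.single g (1 : k) : MonoidAlgebra k H) * MonoidAlgebra.single h 1 =
      MonoidAlgebra.single (g * h) 1 := by
  rw [MonoidAlgebra.single_mul_single, one_mul]

lemma sigma_comp (g h : H) :
    sigma k H V (M := M) g ∘ₗ sigma k H V (M := M) h = sigma k H V (M := M) (h * g) := by
  unfold sigma
  rw [← TensorProduct.map_comp]
  congr 1
  · ext m
    simp only [LinearMap.comp_apply, actM, LinearMap.coe_mk, AddHom.coe_mk]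
    rw [smul_smul, ← MulOpposite.op_mul, single_mul_single']
  · ext v
    simp only [LinearMap.comp_apply, actV, LinearMap.coe_mk, AddHom.coe_mk]
    rw [smul_smul, single_mul_single', mul_inv_rev]

noncomputable def avg (u : k) : TensorProduct k M V →ₗ[k] TensorProduct k M V :=
  u • ∑ h : H, sigma k H V (M := M) h

lemma avg_apply (u : k) (x : TensorProduct k M V) :
    avg k H V (M := M) u x = u • ∑ h : H, sigma k H V (M := M) h x := by
  simp [avg, LinearMap.sum_apply]

lemma avg_sigma_apply (u : k) (h : H) (x : TensorProduct k M V) :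
    avg k H V (M := M) u (sigma k H V (M := M) h x) = avg k H V (M := M) u x := by
  rw [avg_apply, avg_apply]
  congr 1
  calc ∑ g : H, sigma k H V (M := M) g (sigma k H V (M := M) h x)
      = ∑ g : H, sigma k H V (M := M) (h * g) x :=
        Finset.sum_congr rfl fun g _ => by
          have := LinearMap.congr_fun (sigma_comp k H V (M := M) g h) x
          simpa [LinearMap.comp_apply] using this
    _ = ∑ g : H, sigma k H V (M := M) g x :=
        Equiv.sum_comp (Equiv.mulLeft h) fun g => sigma k H V (M := M) g x

lemma sigma_apply_tmul (h : H) (m : M) (v : V) :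
    sigma k H V (M := M) h (m ⊗ₜ[k] v) =
      (MulOpposite.op (MonoidAlgebra.single h (1 : k) : MonoidAlgebra k H) • m)
        ⊗ₜ[k] ((MonoidAlgebra.single h⁻¹ (1 : k) : MonoidAlgebra k H) • v) := rfl

lemma rel_le_ker_avg (u : k) :
    balancedRel k (MonoidAlgebra k H) M V ≤ LinearMap.ker (avg k H V (M := M) u) := by
  rw [balancedRel, Submodule.span_le]
  rintro x ⟨a, m, v, rfl⟩
  rw [SetLike.mem_coe, LinearMap.mem_ker]
  induction a using MonoidAlgebra.induction_on with
  | of g =>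
      rw [MonoidAlgebra.of_apply]
      have key : sigma k H V (M := M) g
          (m ⊗ₜ[k] ((MonoidAlgebra.single g (1 : k) : MonoidAlgebra k H) • v)) =
          (MulOpposite.op (MonoidAlgebra.single g (1 : k) : MonoidAlgebra k H) • m)
            ⊗ₜ[k] v := by
        rw [sigma_apply_tmul]
        congr 1
        rw [smul_smul, single_mul_single', inv_mul_cancel, ← MonoidAlgebra.one_def,
          one_smul]
      rw [map_sub, ← key, avg_sigma_apply, sub_self]
  | add a b ha hb =>
      have expand : (MulOpposite.op (a + b) • m) ⊗ₜ[k] v - m ⊗ₜ[k] ((a + b) • v)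
          = ((MulOpposite.op a • m) ⊗ₜ[k] v - m ⊗ₜ[k] (a • v))
            + ((MulOpposite.op b • m) ⊗ₜ[k] v - m ⊗ₜ[k] (b • v)) := by
        rw [MulOpposite.op_add, add_smul, add_smul, TensorProduct.add_tmul,
          TensorProduct.tmul_add]
        abel
      rw [expand, map_add, ha, hb, add_zero]
  | smul c a ha =>
      have expand : (MulOpposite.op (c • a) • m) ⊗ₜ[k] v - m ⊗ₜ[k] ((c • a) • v)
          = c • ((MulOpposite.op a • m) ⊗ₜ[k] v - m ⊗ₜ[k] (a • v)) := by
        rw [MulOpposite.op_smul, smul_assoc, smul_assoc, smul_sub,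
          TensorProduct.smul_tmul', TensorProduct.tmul_smul]
      rw [expand, map_smul, ha, smul_zero]

lemma sub_sigma_mem_rel (h : H) (x : TensorProduct k M V) :
    x - sigma k H V (M := M) h x ∈ balancedRel k (MonoidAlgebra k H) M V := by
  induction x using TensorProduct.induction_on with
  | zero => simpa using Submodule.zero_mem _
  | tmul m v =>
      rw [sigma_apply_tmul]
      have mem : (MulOpposite.op (MonoidAlgebra.single h (1 : k) : MonoidAlgebra k H) • m)
            ⊗ₜ[k] ((MonoidAlgebra.single h⁻¹ (1 : k) : MonoidAlgebra k H) • v)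
          - m ⊗ₜ[k] ((MonoidAlgebra.single h (1 : k) : MonoidAlgebra k H) •
              ((MonoidAlgebra.single h⁻¹ (1 : k) : MonoidAlgebra k H) • v))
          ∈ balancedRel k (MonoidAlgebra k H) M V :=
        Submodule.subset_span ⟨_, _, _, rfl⟩
      have hv : (MonoidAlgebra.single h (1 : k) : MonoidAlgebra k H) •
          ((MonoidAlgebra.single h⁻¹ (1 : k) : MonoidAlgebra k H) • v) = v := by
        rw [smul_smul, single_mul_single', mul_inv_cancel, ← MonoidAlgebra.one_def,
          one_smul]
      rw [hv] at mem
      have := neg_mem mem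
      rwa [neg_sub] at this
  | add x y hx hy =>
      have expand : x + y - sigma k H V (M := M) h (x + y)
          = (x - sigma k H V (M := M) h x) + (y - sigma k H V (M := M) h y) := by
        rw [map_add]; abel
      rw [expand]; exact add_mem hx hy

lemma sub_avg_mem_rel (u : k) (hu : (Fintype.card H : k) * u = 1)
    (x : TensorProduct k M V) :
    x - avg k H V (M := M) u x ∈ balancedRel k (MonoidAlgebra k H) M V := by
  have hx : x - avg k H V (M := M) u x
      = u • ∑ h : H, (x - sigma k H V (M := M) h x) := by
    rw [Finset.sum_sub_distrib, Finset.sum_const, Finset.card_univ, smul_sub,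
      ← Nat.cast_smul_eq_nsmul k, smul_smul, mul_comm u, hu, one_smul, avg_apply]
  rw [hx]
  exact Submodule.smul_mem _ _ (Submodule.sum_mem _ fun h _ =>
    sub_sigma_mem_rel k H V h x)

end Avg

section Nat

variable (k : Type u) [CommRing k] (H : Type v) [Group H] [Fintype H]
variable {M : Type w} [AddCommGroup M] [Module k M] [Module (MonoidAlgebra k H)ᵐᵒᵖ M]
  [IsScalarTower k (MonoidAlgebra k H)ᵐᵒᵖ M]
variable {M' : Type w'} [AddCommGroup M'] [Module k M'] [Module (MonoidAlgebra k H)ᵐᵒᵖ M']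
  [IsScalarTower k (MonoidAlgebra k H)ᵐᵒᵖ M']
variable (V : Type x) [AddCommGroup V] [Module k V] [Module (MonoidAlgebra k H) V]
  [IsScalarTower k (MonoidAlgebra k H) V]

set_option linter.unusedSectionVars false

lemma sigma_natural (f : M →ₗ[(MonoidAlgebra k H)ᵐᵒᵖ] M') (h : H) :
    LinearMap.rTensor V (f.restrictScalars k) ∘ₗ sigma k H V (M := M) h
      = sigma k H V (M := M') h ∘ₗ LinearMap.rTensor V (f.restrictScalars k) := by
  apply TensorProduct.ext'
  intro m v
  simp only [LinearMap.comp_apply, sigma_apply_tmul, LinearMap.rTensor_tmul,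
    LinearMap.coe_restrictScalars]
  rw [f.map_smul]

lemma avg_natural (f : M →ₗ[(MonoidAlgebra k H)ᵐᵒᵖ] M') (u : k)
    (x : TensorProduct k M V) :
    LinearMap.rTensor V (f.restrictScalars k) (avg k H V (M := M) u x)
      = avg k H V (M := M') u (LinearMap.rTensor V (f.restrictScalars k) x) := by
  rw [avg_apply, avg_apply, map_smul, map_sum]
  congr 1
  refine Finset.sum_congr rfl fun h _ => ?_
  have := LinearMap.congr_fun (sigma_natural k H V (M := M) (M' := M') f h) x
  simpa [LinearMap.comp_apply] using this

end Nat


section BalancedHelper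

variable (k : Type u) [CommRing k] (A : Type v) [Ring A] [Algebra k A]

lemma balancedMap_mk {M M' : Type*} (V : Type*) [AddCommGroup M] [Module k M]
    [Module Aᵐᵒᵖ M] [IsScalarTower k Aᵐᵒᵖ M] [AddCommGroup M'] [Module k M']
    [Module Aᵐᵒᵖ M'] [IsScalarTower k Aᵐᵒᵖ M'] [AddCommGroup V] [Module k V]
    [Module A V] [IsScalarTower k A V] (f : M →ₗ[Aᵐᵒᵖ] M') (z : TensorProduct k M V) :
    balancedMap k A V f (Submodule.Quotient.mk z)
      = (Submodule.Quotient.mk (LinearMap.rTensor V (f.restrictScalars k) z) :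
          BalancedTensor k A M' V) :=
  Submodule.mapQ_apply _ _ _ _

end BalancedHelper

theorem flat_over_group_algebra_of_flat
    (k : Type u) [CommRing k] (H : Type v) [Group H] [Fintype H]
    (hcard : IsUnit ((Fintype.card H : k)))
    (V : Type x) [AddCommGroup V] [Module k V] [Module (MonoidAlgebra k H) V]
    [IsScalarTower k (MonoidAlgebra k H) V] [Module.Flat k V] :
    IsFlatOver.{u, max u v, w} k (MonoidAlgebra k H) V := by
  obtain ⟨u, hu⟩ : ∃ u : k, (Fintype.card H : k) * u = 1 :=
    ⟨↑hcard.unit⁻¹, hcard.mul_val_inv⟩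
  intro M₁ M₂ M₃ i1 i2 i3 i4 i5 i6 i7 i8 i9 i10 i11 i12 f g hfg
  have hex : Function.Exact (LinearMap.rTensor V (f.restrictScalars k))
      (LinearMap.rTensor V (g.restrictScalars k)) :=
    Module.Flat.rTensor_exact V (f := f.restrictScalars k) (g := g.restrictScalars k) hfg
  intro y
  constructor
  · intro hy
    obtain ⟨z, rfl⟩ := Submodule.Quotient.mk_surjective _ y
    rw [balancedMap_mk] at hy
    have hmem : LinearMap.rTensor V (g.restrictScalars k) z
        ∈ balancedRel k (MonoidAlgebra k H) M₃ V :=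
      (Submodule.Quotient.mk_eq_zero _).mp hy
    have havg3 : avg k H V (M := M₃) u (LinearMap.rTensor V (g.restrictScalars k) z) = 0 :=
      LinearMap.mem_ker.mp (rel_le_ker_avg k H V u hmem)
    have hw : LinearMap.rTensor V (g.restrictScalars k) (avg k H V (M := M₂) u z) = 0 := by
      exact (avg_natural k H V (M := M₂) (M' := M₃) g u z).trans havg3
    obtain ⟨t, ht⟩ := (hex (avg k H V (M := M₂) u z)).mp hw
    refine ⟨Submodule.Quotient.mk t, ?_⟩
    rw [balancedMap_mk, ht]
    refine (Submodule.Quotient.eq _).mpr ?_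
    have hmem2 := neg_mem (sub_avg_mem_rel k H V u hu z)
    rwa [neg_sub] at hmem2
  · rintro ⟨x, rfl⟩
    obtain ⟨z, rfl⟩ := Submodule.Quotient.mk_surjective _ x
    rw [balancedMap_mk, balancedMap_mk]
    have : LinearMap.rTensor V (g.restrictScalars k)
        (LinearMap.rTensor V (f.restrictScalars k) z) = 0 :=
      (hex _).mpr ⟨z, rfl⟩
    rw [this]
    exact Submodule.Quotient.mk_zero _
end

section
/- Let G be a discrete group, k a commutative unital ring, and X a totally disconnected, locally compact, Hausdorff topological space on which G acts by homeomorphisms. For a conjugacy class c of torsion elements of G, let X̂_c := {(x,h) ∈ X̂ : h ∈ c}. Then: (1) each X̂_c is an open, closed, G-invariant subset of X̂, and the restriction maps induce an isomorphism of k-linear G-representations k[X̂] ≅ ⊕_{c ∈ G_tor//G} k[X̂_c]; (2) for each conjugacy class c with chosen representative g ∈ c, there is an isomorphism of k-linear G-representations k[X̂_c] ≅ Ind_{Z(g)}^G k[X^{g}], where Z(g) is the centralizer of g in G and X^{g} = {x ∈ X : gx = x} with the restricted Z(g)-action. -/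
/-!
STATEMENT 5: Let G be a discrete group, k a commutative unital ring, and X a totally
disconnected locally compact Hausdorff G-space.  For each conjugacy class c of torsion
elements of G (with fixed representative t), let X̂_c := {(x,h) ∈ X̂ : h ∈ c}.  Then:
(1) each X̂_c is an open, closed, G-invariant subset of X̂, and the restriction maps
induce an isomorphism of k-linear G-representations k[X̂] ≅ ⊕_c k[X̂_c]; and
(2) for each class c with representative t there is an isomorphism of k-linear
G-representations k[X̂_c] ≅ Ind_{Z(t)}^G k[X^t], where Z(t) is the centralizer of t and
X^t the t-fixed-point set; Ind_H^G N is realized as the space of functions f : G → N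
with f(gh) = h⁻¹·f(g), vanishing outside finitely many left cosets of H, with
(g'·f)(g) = f(g'⁻¹g).
-/

universe u

open Function

variable (k : Type u) [CommRing k]

/-- The `k`-module of compactly supported locally constant `k`-valued functions on a
topological space `S`. -/
def cslc (S : Type u) [TopologicalSpace S] : Submodule k (S → k) where
  carrier := {f | IsLocallyConstant f ∧ HasCompactSupport f}
  add_mem' := fun {f} {g} hf hg =>
    ⟨by exact (hf.1.prodMk hg.1).comp (fun p : k × k => p.1 + p.2),
      hf.2.add hg.2⟩
  zero_mem' := ⟨IsLocallyConstant.const 0, HasCompactSupport.zero⟩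
  smul_mem' := fun c f hf =>
    ⟨hf.1.comp (fun x : k => c • x),
      hf.2.mono (Function.support_const_smul_subset c f)⟩

/-- Precomposition by `τ`, as a linear map on functions. -/
def precompLinear {S : Type u} (τ : S → S) : (S → k) →ₗ[k] (S → k) where
  toFun f := f ∘ τ
  map_add' _ _ := rfl
  map_smul' _ _ := rfl

/-- The permutation representation of a group `G` acting continuously on a space `S`, on
the compactly supported locally constant functions on `S`: `(g·f)(s) = f(g⁻¹ • s)`. -/
def permRep (G : Type u) [Group G] (S : Type u) [TopologicalSpace S] [MulAction G S]
    [ContinuousConstSMul G S] : Representation k G ↥(cslc k S) where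
  toFun g := LinearMap.restrict (precompLinear k (fun s : S => g⁻¹ • s))
    (fun f hf => show IsLocallyConstant _ ∧ HasCompactSupport _ from
      ⟨hf.1.comp_continuous (continuous_const_smul g⁻¹),
        hf.2.comp_homeomorph (Homeomorph.smul g⁻¹)⟩)
  map_one' := by
    apply LinearMap.ext; intro f; apply Subtype.ext
    funext s
    simp [precompLinear, LinearMap.restrict_apply]
  map_mul' g₁ g₂ := by
    apply LinearMap.ext; intro f; apply Subtype.ext
    funext s
    simp [precompLinear, LinearMap.restrict_apply, mul_smul]

section TorsionFix

variable (G : Type u) [Group G] [TopologicalSpace G] [DiscreteTopology G]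
variable (X : Type u) [TopologicalSpace X] [MulAction G X] [ContinuousConstSMul G X]

/-- The space `X̂ = {(x,g) ∈ X × G : g torsion, gx = x}`, topologized as a subspace of
`X × G` (with `G` discrete). -/
abbrev TorsionFix : Type u := {p : X × G // IsOfFinOrder p.2 ∧ p.2 • p.1 = p.1}

instance TorsionFix.instSMul : SMul G (TorsionFix G X) :=
  ⟨fun h p => ⟨(h • p.1.1, h * p.1.2 * h⁻¹),
    ⟨(MulAut.conj h).toMonoidHom.isOfFinOrder p.2.1, by
      have := p.2.2
      simp [mul_smul, this]⟩⟩⟩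

@[simp] lemma TorsionFix.smul_coe (h : G) (p : TorsionFix G X) :
    ((h • p : TorsionFix G X) : X × G) = (h • p.1.1, h * p.1.2 * h⁻¹) := rfl

instance TorsionFix.instMulAction : MulAction G (TorsionFix G X) where
  one_smul p := by
    apply Subtype.ext
    rw [TorsionFix.smul_coe]
    simp
  mul_smul a b p := by
    apply Subtype.ext
    simp only [TorsionFix.smul_coe]
    simp [mul_smul, mul_assoc]

instance TorsionFix.instContinuousConstSMul : ContinuousConstSMul G (TorsionFix G X) := by
  constructor
  intro h
  apply Continuous.subtype_mk
  exact Continuous.prodMk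
    ((continuous_fst.comp continuous_subtype_val).const_smul h)
    ((continuous_of_discreteTopology (f := fun g : G => h * g * h⁻¹)).comp
      (continuous_snd.comp continuous_subtype_val))

end TorsionFix

section FixedPoints

variable (G : Type u) [Group G]
variable (X : Type u) [TopologicalSpace X] [MulAction G X] [ContinuousConstSMul G X]

/-- The set of fixed points of `t`, as a topological space with the subspace topology. -/
abbrev FixedPts (t : G) : Type u := {x : X // t • x = x}

instance FixedPts.instSMul (t : G) :
    SMul ↥(Subgroup.centralizer ({t} : Set G)) (FixedPts G X t) :=
  ⟨fun z x => ⟨(z : G) • x.1, by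
    have hz : t * (z : G) = (z : G) * t :=
      Subgroup.mem_centralizer_iff.mp z.2 t (Set.mem_singleton t)
    calc t • ((z : G) • x.1) = (t * (z : G)) • x.1 := (mul_smul _ _ _).symm
      _ = ((z : G) * t) • x.1 := by rw [hz]
      _ = (z : G) • (t • x.1) := mul_smul _ _ _
      _ = (z : G) • x.1 := by rw [x.2]⟩⟩

@[simp] lemma FixedPts.smul_coe (t : G) (z : ↥(Subgroup.centralizer ({t} : Set G)))
    (x : FixedPts G X t) : ((z • x : FixedPts G X t) : X) = (z : G) • (x : X) := rfl

instance FixedPts.instMulAction (t : G) :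
    MulAction ↥(Subgroup.centralizer ({t} : Set G)) (FixedPts G X t) where
  one_smul x := by
    apply Subtype.ext
    simp
  mul_smul a b x := by
    apply Subtype.ext
    simp [mul_smul]

instance FixedPts.instContinuousConstSMul (t : G) :
    ContinuousConstSMul ↥(Subgroup.centralizer ({t} : Set G)) (FixedPts G X t) := by
  constructor
  intro z
  exact (continuous_subtype_val.const_smul (z : G)).subtype_mk _

end FixedPoints

section ClassPart

variable (G : Type u) [Group G] [TopologicalSpace G] [DiscreteTopology G]
variable (X : Type u) [TopologicalSpace X] [MulAction G X] [ContinuousConstSMul G X]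

/-- The part `X̂_c` of `X̂` lying over the conjugacy class `c` of `t`. -/
abbrev ClassPart (t : G) : Type u := {p : TorsionFix G X // IsConj t (p : X × G).2}

instance ClassPart.instSMul (t : G) : SMul G (ClassPart G X t) :=
  ⟨fun h p => ⟨h • p.1, p.2.trans (isConj_iff.mpr ⟨h, rfl⟩)⟩⟩

@[simp] lemma ClassPart.smul_coe (t : G) (h : G) (p : ClassPart G X t) :
    ((h • p : ClassPart G X t) : TorsionFix G X) = h • (p : TorsionFix G X) := rfl

instance ClassPart.instMulAction (t : G) : MulAction G (ClassPart G X t) where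
  one_smul p := by
    apply Subtype.ext
    rw [ClassPart.smul_coe, one_smul]
  mul_smul a b p := by
    apply Subtype.ext
    simp only [ClassPart.smul_coe, mul_smul]

instance ClassPart.instContinuousConstSMul (t : G) :
    ContinuousConstSMul G (ClassPart G X t) := by
  constructor
  intro h
  exact (((continuous_const_smul h).comp continuous_subtype_val).subtype_mk _)

end ClassPart

section Induced

variable (G : Type u) [Group G] (H : Subgroup G)
variable (N : Type u) [AddCommGroup N] [Module k N] (ρ : Representation k ↥H N)

/-- The underlying `k`-module of the induced representation `Ind_H^G N`: functions
`f : G → N` with `f (g h) = h⁻¹ · f g` vanishing outside finitely many left cosets. -/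
def indCarrier : Submodule k (G → N) where
  carrier := {f | (∀ (g : G) (h : ↥H), f (g * h) = ρ h⁻¹ (f g)) ∧
    Set.Finite ((fun g : G => (QuotientGroup.mk g : G ⧸ H)) '' Function.support f)}
  add_mem' := fun {f₁} {f₂} h₁ h₂ =>
    ⟨fun g h => by simp [h₁.1 g h, h₂.1 g h],
      Set.Finite.subset (h₁.2.union h₂.2) (by
        rw [← Set.image_union]
        exact Set.image_mono (Function.support_add f₁ f₂))⟩
  zero_mem' := ⟨fun g h => by simp, by simp⟩
  smul_mem' := fun c f hf =>
    ⟨fun g h => by simp [hf.1 g h],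
      hf.2.subset (Set.image_mono (Function.support_const_smul_subset c f))⟩

/-- The induced representation `Ind_H^G N`, with `(g'·f)(g) = f (g'⁻¹ g)`. -/
def indRep : Representation k G ↥(indCarrier k G H N ρ) where
  toFun g' :=
    { toFun := fun f => ⟨fun g => (f : G → N) (g'⁻¹ * g),
        ⟨fun g h => by
          show (f : G → N) (g'⁻¹ * (g * h)) = ρ h⁻¹ ((f : G → N) (g'⁻¹ * g))
          rw [← mul_assoc]
          exact f.2.1 (g'⁻¹ * g) h, by
          have hs : Function.support (fun g => (f : G → N) (g'⁻¹ * g))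
              = (fun x : G => g' * x) '' Function.support (f : G → N) := by
            ext y
            constructor
            · intro hy
              exact ⟨g'⁻¹ * y, hy, by
                show g' * (g'⁻¹ * y) = y
                rw [mul_inv_cancel_left]⟩
            · rintro ⟨x, hx, rfl⟩
              show (f : G → N) (g'⁻¹ * (g' * x)) ≠ 0
              rwa [inv_mul_cancel_left]
          rw [hs, Set.image_image]
          have him : ((fun x : G => (QuotientGroup.mk (g' * x) : G ⧸ H)) ''
              Function.support (f : G → N))
              = (fun q : G ⧸ H => g' • q) ''
                ((fun g : G => (QuotientGroup.mk g : G ⧸ H)) ''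
                  Function.support (f : G → N)) := by
            rw [Set.image_image]
            refine Set.image_congr fun x _ => ?_
            exact (MulAction.Quotient.smul_mk H g' x).symm
          rw [him]
          exact f.2.2.image _⟩⟩
      map_add' := fun f₁ f₂ => Subtype.ext rfl
      map_smul' := fun c f => Subtype.ext rfl }
  map_one' := by
    apply LinearMap.ext
    intro f
    apply Subtype.ext
    funext g
    show (f : G → N) ((1 : G)⁻¹ * g) = (f : G → N) g
    rw [inv_one, one_mul]
  map_mul' g₁ g₂ := by
    apply LinearMap.ext
    intro f
    apply Subtype.ext
    funext g
    show (f : G → N) ((g₁ * g₂)⁻¹ * g) = (f : G → N) (g₂⁻¹ * (g₁⁻¹ * g))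
    rw [mul_inv_rev, mul_assoc]

end Induced

noncomputable section AuxProof

open Topology Function
open scoped DirectSum

variable (k : Type u) [CommRing k]
variable (G : Type u) [Group G] [TopologicalSpace G] [DiscreteTopology G]
variable (X : Type u) [TopologicalSpace X] [MulAction G X] [ContinuousConstSMul G X]

lemma lcSnd : IsLocallyConstant (fun p : TorsionFix G X => (p : X × G).2) :=
  fun s => (isOpen_discrete s).preimage (continuous_snd.comp continuous_subtype_val)

lemma classSet_isOpen (t : G) : IsOpen {p : TorsionFix G X | IsConj t (p : X × G).2} :=
  lcSnd G X {g : G | IsConj t g}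

lemma classSet_isClosed (t : G) :
    IsClosed {p : TorsionFix G X | IsConj t (p : X × G).2} := by
  rw [← isOpen_compl_iff]
  have h : IsOpen {p : TorsionFix G X | ¬ IsConj t (p : X × G).2} :=
    lcSnd G X {g : G | ¬ IsConj t g}
  exact h

lemma cslc_exists_ne_zero {S : Type u} [TopologicalSpace S] {w : ↥(cslc k S)}
    (hw : w ≠ 0) : ∃ s : S, (w : S → k) s ≠ 0 := by
  by_contra hc
  push_neg at hc
  exact hw (Subtype.ext (funext fun s => hc s))

/-- Restriction of a function on `X̂` to the part `X̂_c`. -/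
def restMap (t : G) : ↥(cslc k (TorsionFix G X)) →ₗ[k] ↥(cslc k (ClassPart G X t)) where
  toFun f := ⟨fun p => (f : TorsionFix G X → k) p.val,
    ⟨f.2.1.comp_continuous continuous_subtype_val,
      f.2.2.comp_isClosedEmbedding
        (Topology.IsClosedEmbedding.subtypeVal (classSet_isClosed G X t))⟩⟩
  map_add' f g := Subtype.ext rfl
  map_smul' c f := Subtype.ext rfl

open Classical in
/-- Extension by zero of a function on `X̂_c` to `X̂`. -/
def extFun (t : G) (w : ↥(cslc k (ClassPart G X t))) (p : TorsionFix G X) : k :=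
  if h : IsConj t (p : X × G).2 then (w : ClassPart G X t → k) ⟨p, h⟩ else 0

lemma extFun_lc (t : G) (w : ↥(cslc k (ClassPart G X t))) :
    IsLocallyConstant (extFun k G X t w) := by
  rw [IsLocallyConstant.iff_exists_open]
  intro p
  by_cases h : IsConj t (p : X × G).2
  · obtain ⟨V, hVo, hpV, hV⟩ := w.2.1.exists_open (⟨p, h⟩ : ClassPart G X t)
    obtain ⟨W, hWo, hVW⟩ := isOpen_induced_iff.mp hVo
    refine ⟨W ∩ {q : TorsionFix G X | IsConj t (q : X × G).2},
      hWo.inter (classSet_isOpen G X t), ⟨?_, h⟩, ?_⟩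
    · have hmem : (⟨p, h⟩ : ClassPart G X t) ∈ V := hpV
      rw [← hVW] at hmem
      exact hmem
    · rintro q ⟨hqW, hq⟩
      have hq' : IsConj t ((q : X × G)).2 := hq
      rw [extFun, dif_pos hq', extFun, dif_pos h]
      have hqV : (⟨q, hq⟩ : ClassPart G X t) ∈ V := by
        rw [← hVW]; exact hqW
      exact hV ⟨q, hq⟩ hqV
  · refine ⟨{q : TorsionFix G X | ¬ IsConj t (q : X × G).2},
      lcSnd G X {g : G | ¬ IsConj t g}, h, ?_⟩
    intro q hq
    rw [extFun, dif_neg hq, extFun, dif_neg h]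

variable [T2Space X]

lemma extFun_cs (t : G) (w : ↥(cslc k (ClassPart G X t))) :
    HasCompactSupport (extFun k G X t w) := by
  have himage : IsCompact
      ((Subtype.val '' tsupport (w : ClassPart G X t → k)) : Set (TorsionFix G X)) :=
    (w.2.2).image continuous_subtype_val
  refine IsCompact.of_isClosed_subset himage isClosed_closure
    (closure_minimal ?_ himage.isClosed)
  intro p hp
  rw [mem_support] at hp
  by_cases h : IsConj t (p : X × G).2
  · refine ⟨⟨p, h⟩, subset_closure ?_, rfl⟩
    rw [mem_support]
    intro h0
    apply hp
    rw [extFun, dif_pos h, h0]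
  · exact absurd (by rw [extFun, dif_neg h]) hp

/-- Extension by zero, as a linear map. -/
def extMap (t : G) : ↥(cslc k (ClassPart G X t)) →ₗ[k] ↥(cslc k (TorsionFix G X)) where
  toFun w := ⟨extFun k G X t w, ⟨extFun_lc k G X t w, extFun_cs k G X t w⟩⟩
  map_add' w₁ w₂ := by
    apply Subtype.ext
    funext p
    show extFun k G X t (w₁ + w₂) p = extFun k G X t w₁ p + extFun k G X t w₂ p
    by_cases h : IsConj t (p : X × G).2
    · simp only [extFun, dif_pos h]; rfl
    · simp only [extFun, dif_neg h]; simp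
  map_smul' c w := by
    apply Subtype.ext
    funext p
    show extFun k G X t (c • w) p = c • extFun k G X t w p
    by_cases h : IsConj t (p : X × G).2
    · simp only [extFun, dif_pos h]; rfl
    · simp only [extFun, dif_neg h]; simp

variable (T : Set G)

/-- The sum of the extension-by-zero maps, from `⊕_c k[X̂_c]` to `k[X̂]`. -/
def Phi [DecidableEq (↥T)] : (⨁ (t : T), ↥(cslc k (ClassPart G X (t : G)))) →ₗ[k]
    ↥(cslc k (TorsionFix G X)) :=
  DirectSum.toModule k T _ (fun t => extMap k G X (t : G))

lemma Phi_eval [DecidableEq (↥T)] (hT₂ : ∀ g : G, IsOfFinOrder g → ∃! t, t ∈ T ∧ IsConj t g)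
    (w : ⨁ (t : T), ↥(cslc k (ClassPart G X (t : G)))) (t : T)
    (q : TorsionFix G X) (h : IsConj (t : G) (q : X × G).2) :
    (Phi k G X T w : TorsionFix G X → k) q
      = (w t : ClassPart G X (t : G) → k) ⟨q, h⟩ := by
  induction w using DirectSum.induction_on with
  | zero => simp [Phi]
  | of t' x =>
    rw [Phi, ← DirectSum.lof_eq_of k, DirectSum.toModule_lof]
    by_cases hne : t' = t
    · subst hne
      rw [DirectSum.lof_apply]
      show extFun k G X (t' : G) x q = _
      rw [extFun, dif_pos h]
    · rw [DirectSum.lof_eq_of, DirectSum.of_eq_of_ne _ _ _ (Ne.symm hne)]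
      have hnc : ¬ IsConj (t' : G) (q : X × G).2 := by
        intro hc
        obtain ⟨s, _, huniq⟩ := hT₂ (q : X × G).2 q.2.1
        exact hne (Subtype.ext ((huniq (t' : G) ⟨t'.2, hc⟩).trans
          (huniq (t : G) ⟨t.2, h⟩).symm))
      show extFun k G X (t' : G) x q = _
      rw [extFun, dif_neg hnc]
      simp
  | add w₁ w₂ ih₁ ih₂ =>
    rw [map_add]
    show (Phi k G X T w₁ : TorsionFix G X → k) q
        + (Phi k G X T w₂ : TorsionFix G X → k) q = _
    rw [ih₁, ih₂, DirectSum.add_apply]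
    rfl

lemma rest_finite (hT₂ : ∀ g : G, IsOfFinOrder g → ∃! t, t ∈ T ∧ IsConj t g)
    (f : ↥(cslc k (TorsionFix G X))) :
    {t : T | restMap k G X (t : G) f ≠ 0}.Finite := by
  set D := (fun p : TorsionFix G X => (p : X × G).2) ''
      tsupport (f : TorsionFix G X → k) with hDdef
  have hD : Set.Finite D :=
    ((f.2.2).image (continuous_snd.comp continuous_subtype_val)).finite_of_discrete
  have hsub : {t : T | restMap k G X (t : G) f ≠ 0}
      ⊆ ⋃ g ∈ D, {t : T | IsConj (t : G) g} := by
    intro t ht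
    obtain ⟨p, hp⟩ := cslc_exists_ne_zero k ht
    have hpK : (p : TorsionFix G X) ∈ tsupport (f : TorsionFix G X → k) :=
      subset_closure hp
    exact Set.mem_biUnion ⟨(p : TorsionFix G X), hpK, rfl⟩ p.2
  refine Set.Finite.subset (hD.biUnion fun g hg => ?_) hsub
  obtain ⟨p, _, rfl⟩ := hg
  have htor : IsOfFinOrder (p : X × G).2 := p.2.1
  obtain ⟨s, _, huniq⟩ := hT₂ _ htor
  exact Set.Subsingleton.finite fun t₁ h₁ t₂ h₂ =>
    Subtype.ext ((huniq (t₁ : G) ⟨t₁.2, h₁⟩).trans (huniq (t₂ : G) ⟨t₂.2, h₂⟩).symm)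

end AuxProof

section AuxInd

variable (k : Type u) [CommRing k]
variable (G : Type u) [Group G] [TopologicalSpace G] [DiscreteTopology G]
variable (X : Type u) [TopologicalSpace X] [MulAction G X] [ContinuousConstSMul G X]
variable (t₀ : G)

lemma centr_comm (z : ↥(Subgroup.centralizer ({t₀} : Set G))) :
    t₀ * (z : G) = (z : G) * t₀ :=
  Subgroup.mem_centralizer_iff.mp z.2 t₀ (Set.mem_singleton t₀)

lemma centr_of_conj_eq {a b : G} (hab : a * t₀ * a⁻¹ = b * t₀ * b⁻¹) :
    a⁻¹ * b ∈ Subgroup.centralizer ({t₀} : Set G) := by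
  rw [Subgroup.mem_centralizer_iff]
  intro g hg
  rw [Set.mem_singleton_iff] at hg
  subst hg
  have h2 := congrArg (fun y => a⁻¹ * y * b) hab
  simpa [mul_assoc] using h2

/-- The conjugation map `G ⧸ Z(t₀) → G`. -/
def conjQ : G ⧸ Subgroup.centralizer ({t₀} : Set G) → G :=
  Quotient.lift (fun g : G => g * t₀ * g⁻¹) (fun a b hab => by
    have h := QuotientGroup.leftRel_apply.mp hab
    have hcomm := Subgroup.mem_centralizer_iff.mp h t₀ (Set.mem_singleton t₀)
    have h2 := congrArg (fun y => a * y * b⁻¹) hcomm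
    simpa [mul_assoc] using h2)

lemma conjQ_mk (g : G) : conjQ G t₀ (QuotientGroup.mk g) = g * t₀ * g⁻¹ := rfl

lemma conjQ_inj : Function.Injective (conjQ G t₀) := by
  intro q₁ q₂
  refine Quotient.inductionOn₂ q₁ q₂ (fun a b h => ?_)
  exact QuotientGroup.eq.mpr (centr_of_conj_eq G t₀ h)

open Classical in
/-- A choice of conjugating element. -/
noncomputable def chC (h : G) : G :=
  if hc : IsConj t₀ h then (isConj_iff.mp hc).choose else 1

lemma chC_spec {h : G} (hc : IsConj t₀ h) : chC G t₀ h * t₀ * (chC G t₀ h)⁻¹ = h := by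
  rw [chC, dif_pos hc]
  exact (isConj_iff.mp hc).choose_spec

/-- The point of `X̂_c` over a fixed point of `t₀`, translated by `g`. -/
def pt (ht : IsOfFinOrder t₀) (g : G) (x : FixedPts G X t₀) : ClassPart G X t₀ :=
  ⟨⟨(g • (x : X), g * t₀ * g⁻¹),
    ⟨(MulAut.conj g).toMonoidHom.isOfFinOrder ht, by
      show (g * t₀ * g⁻¹) • (g • (x : X)) = g • (x : X)
      rw [mul_smul, mul_smul, inv_smul_smul, x.2]⟩⟩,
    isConj_iff.mpr ⟨g, rfl⟩⟩

lemma pt_continuous (ht : IsOfFinOrder t₀) (g : G) :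
    Continuous (fun x : FixedPts G X t₀ => pt G X t₀ ht g x) := by
  apply Continuous.subtype_mk
  apply Continuous.subtype_mk
  exact (continuous_subtype_val.const_smul g).prodMk continuous_const

lemma pt_smul (ht : IsOfFinOrder t₀) (h g : G) (x : FixedPts G X t₀) :
    pt G X t₀ ht (h * g) x = h • pt G X t₀ ht g x := by
  apply Subtype.ext
  apply Subtype.ext
  show ((h * g) • (x : X), (h * g) * t₀ * (h * g)⁻¹)
      = (h • (g • (x : X)), h * (g * t₀ * g⁻¹) * h⁻¹)
  rw [mul_smul]
  congr 1
  group

lemma pt_mul_centr (ht : IsOfFinOrder t₀) (g : G)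
    (h : ↥(Subgroup.centralizer ({t₀} : Set G))) (x : FixedPts G X t₀) :
    pt G X t₀ ht (g * (h : G)) x = pt G X t₀ ht g (h • x) := by
  have h1 : (h : G) * t₀ * (h : G)⁻¹ = t₀ := by
    have hc := centr_comm G t₀ h
    rw [← hc]
    group
  apply Subtype.ext
  apply Subtype.ext
  show ((g * (h : G)) • (x : X), (g * (h : G)) * t₀ * (g * (h : G))⁻¹)
      = (g • ((h : G) • (x : X)), g * t₀ * g⁻¹)
  rw [mul_smul]
  congr 1
  refine Eq.trans (by group :
    (g * (h : G)) * t₀ * (g * (h : G))⁻¹ = g * ((h : G) * t₀ * (h : G)⁻¹) * g⁻¹) ?_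
  rw [h1]

lemma bwd_fix (p : ClassPart G X t₀) {c : G}
    (hc : c * t₀ * c⁻¹ = ((p : TorsionFix G X) : X × G).2) :
    t₀ • (c⁻¹ • ((p : TorsionFix G X) : X × G).1)
      = c⁻¹ • ((p : TorsionFix G X) : X × G).1 := by
  have h1 : t₀ * c⁻¹ = c⁻¹ * ((p : TorsionFix G X) : X × G).2 := by
    rw [← hc]; group
  rw [← mul_smul, h1, mul_smul, (p : TorsionFix G X).2.2]

/-- The fixed point of `t₀` obtained from a point of `X̂_c` by untwisting by `c`. -/
def fpt (p : ClassPart G X t₀) (c : G)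
    (hc : c * t₀ * c⁻¹ = ((p : TorsionFix G X) : X × G).2) : FixedPts G X t₀ :=
  ⟨c⁻¹ • ((p : TorsionFix G X) : X × G).1, bwd_fix G X t₀ p hc⟩

lemma pt_fpt (ht : IsOfFinOrder t₀) (p : ClassPart G X t₀) (c : G)
    (hc : c * t₀ * c⁻¹ = ((p : TorsionFix G X) : X × G).2) :
    pt G X t₀ ht c (fpt G X t₀ p c hc) = p := by
  apply Subtype.ext
  apply Subtype.ext
  show (c • (c⁻¹ • ((p : TorsionFix G X) : X × G).1), c * t₀ * c⁻¹)
      = ((p : TorsionFix G X) : X × G)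
  rw [smul_inv_smul, hc]

lemma fpt_pt (ht : IsOfFinOrder t₀) (g : G) (x : FixedPts G X t₀)
    (hc : g * t₀ * g⁻¹ = ((pt G X t₀ ht g x : TorsionFix G X) : X × G).2) :
    fpt G X t₀ (pt G X t₀ ht g x) g hc = x := by
  apply Subtype.ext
  show g⁻¹ • (g • (x : X)) = (x : X)
  exact inv_smul_smul g _

end AuxInd

section AuxInd2

open Function

variable (k : Type u) [CommRing k]
variable (G : Type u) [Group G] [TopologicalSpace G] [DiscreteTopology G]
variable (X : Type u) [TopologicalSpace X] [MulAction G X] [ContinuousConstSMul G X]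
variable [T2Space X]
variable (t₀ : G)

lemma fwdF_mem (ht : IsOfFinOrder t₀) (f : ↥(cslc k (ClassPart G X t₀))) (g : G) :
    (fun x : FixedPts G X t₀ => (f : ClassPart G X t₀ → k) (pt G X t₀ ht g x))
      ∈ cslc k (FixedPts G X t₀) := by
  constructor
  · exact f.2.1.comp_continuous (pt_continuous G X t₀ ht g)
  · have hK : IsCompact (tsupport (f : ClassPart G X t₀ → k)) := f.2.2
    have hKt : IsCompact ((fun p : ClassPart G X t₀ => ((p : TorsionFix G X) : X × G)) ''
        tsupport (f : ClassPart G X t₀ → k)) :=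
      hK.image (continuous_subtype_val.comp continuous_subtype_val)
    have hA : IsCompact (Prod.fst ''
        (((fun p : ClassPart G X t₀ => ((p : TorsionFix G X) : X × G)) ''
          tsupport (f : ClassPart G X t₀ → k)) ∩ {r : X × G | r.2 = g * t₀ * g⁻¹})) :=
      (hKt.inter_right (isClosed_eq continuous_snd continuous_const)).image continuous_fst
    have hm : Topology.IsClosedEmbedding (fun x : FixedPts G X t₀ => g • (x : X)) :=
      ((Homeomorph.smul g : X ≃ₜ X)).isClosedEmbedding.comp
        (Topology.IsClosedEmbedding.subtypeVal
          (isClosed_eq (continuous_const_smul t₀) continuous_id))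
    have hpre : IsCompact ((fun x : FixedPts G X t₀ => g • (x : X)) ⁻¹' (Prod.fst ''
        (((fun p : ClassPart G X t₀ => ((p : TorsionFix G X) : X × G)) ''
          tsupport (f : ClassPart G X t₀ → k)) ∩ {r : X × G | r.2 = g * t₀ * g⁻¹}))) :=
      hm.isCompact_preimage hA
    refine IsCompact.of_isClosed_subset hpre isClosed_closure
      (closure_minimal ?_ (hA.isClosed.preimage hm.continuous))
    intro x hx
    rw [mem_support] at hx
    have hmem : pt G X t₀ ht g x ∈ tsupport (f : ClassPart G X t₀ → k) :=
      subset_closure (by rwa [mem_support])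
    exact ⟨(g • (x : X), g * t₀ * g⁻¹), ⟨⟨pt G X t₀ ht g x, hmem, rfl⟩, rfl⟩, rfl⟩

lemma fwd_mem (ht : IsOfFinOrder t₀) (f : ↥(cslc k (ClassPart G X t₀))) :
    (fun g : G =>
      (⟨fun x : FixedPts G X t₀ => (f : ClassPart G X t₀ → k) (pt G X t₀ ht g x),
        fwdF_mem k G X t₀ ht f g⟩ : ↥(cslc k (FixedPts G X t₀))))
      ∈ indCarrier k G (Subgroup.centralizer ({t₀} : Set G)) (↥(cslc k (FixedPts G X t₀)))
          (permRep k (↥(Subgroup.centralizer ({t₀} : Set G))) (FixedPts G X t₀)) := by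
  constructor
  · intro g h
    apply Subtype.ext
    funext x
    show (f : ClassPart G X t₀ → k) (pt G X t₀ ht (g * (h : G)) x)
        = (f : ClassPart G X t₀ → k) (pt G X t₀ ht g ((h⁻¹)⁻¹ • x))
    rw [inv_inv, pt_mul_centr]
  · have hKt : IsCompact ((fun p : ClassPart G X t₀ => ((p : TorsionFix G X) : X × G)) ''
        tsupport (f : ClassPart G X t₀ → k)) :=
      f.2.2.image (continuous_subtype_val.comp continuous_subtype_val)
    have hD : Set.Finite (Prod.snd ''
        ((fun p : ClassPart G X t₀ => ((p : TorsionFix G X) : X × G)) ''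
          tsupport (f : ClassPart G X t₀ → k))) :=
      (hKt.image continuous_snd).finite_of_discrete
    refine Set.Finite.subset
      (Set.Finite.preimage (fun a _ b _ hab => conjQ_inj G t₀ hab) hD) ?_
    rintro q ⟨g, hg, rfl⟩
    have hx : ∃ x, (f : ClassPart G X t₀ → k) (pt G X t₀ ht g x) ≠ 0 := by
      by_contra hcon
      push_neg at hcon
      exact hg (Subtype.ext (funext hcon))
    obtain ⟨x, hx⟩ := hx
    exact ⟨((pt G X t₀ ht g x : TorsionFix G X) : X × G),
      ⟨pt G X t₀ ht g x, subset_closure hx, rfl⟩, rfl⟩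

/-- The forward map `k[X̂_c] → Ind_{Z(t₀)}^G k[X^{t₀}]`. -/
def fwdL (ht : IsOfFinOrder t₀) :
    ↥(cslc k (ClassPart G X t₀)) →ₗ[k]
      ↥(indCarrier k G (Subgroup.centralizer ({t₀} : Set G)) (↥(cslc k (FixedPts G X t₀)))
        (permRep k (↥(Subgroup.centralizer ({t₀} : Set G))) (FixedPts G X t₀))) where
  toFun f := ⟨fun g =>
      ⟨fun x : FixedPts G X t₀ => (f : ClassPart G X t₀ → k) (pt G X t₀ ht g x),
        fwdF_mem k G X t₀ ht f g⟩, fwd_mem k G X t₀ ht f⟩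
  map_add' f₁ f₂ := Subtype.ext (funext fun g => Subtype.ext (funext fun x => rfl))
  map_smul' c f := Subtype.ext (funext fun g => Subtype.ext (funext fun x => rfl))

/-- The backward function: untwist by a choice of conjugator. -/
noncomputable def bwdF
    (F : ↥(indCarrier k G (Subgroup.centralizer ({t₀} : Set G)) (↥(cslc k (FixedPts G X t₀)))
        (permRep k (↥(Subgroup.centralizer ({t₀} : Set G))) (FixedPts G X t₀))))
    (p : ClassPart G X t₀) : k :=
  ((F : G → ↥(cslc k (FixedPts G X t₀))) (chC G t₀ ((p : TorsionFix G X) : X × G).2) :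
    FixedPts G X t₀ → k) (fpt G X t₀ p _ (chC_spec G t₀ p.2))

lemma bwd_wd
    (F : ↥(indCarrier k G (Subgroup.centralizer ({t₀} : Set G)) (↥(cslc k (FixedPts G X t₀)))
        (permRep k (↥(Subgroup.centralizer ({t₀} : Set G))) (FixedPts G X t₀))))
    (p : ClassPart G X t₀) (c₁ c₂ : G)
    (h₁ : c₁ * t₀ * c₁⁻¹ = ((p : TorsionFix G X) : X × G).2)
    (h₂ : c₂ * t₀ * c₂⁻¹ = ((p : TorsionFix G X) : X × G).2) :
    ((F : G → ↥(cslc k (FixedPts G X t₀))) c₁ : FixedPts G X t₀ → k) (fpt G X t₀ p c₁ h₁)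
      = ((F : G → ↥(cslc k (FixedPts G X t₀))) c₂ : FixedPts G X t₀ → k)
          (fpt G X t₀ p c₂ h₂) := by
  have hzmem : c₁⁻¹ * c₂ ∈ Subgroup.centralizer ({t₀} : Set G) :=
    centr_of_conj_eq G t₀ (h₁.trans h₂.symm)
  set z : ↥(Subgroup.centralizer ({t₀} : Set G)) := ⟨c₁⁻¹ * c₂, hzmem⟩ with hzdef
  have hc : c₁ * (z : G) = c₂ := by
    show c₁ * (c₁⁻¹ * c₂) = c₂
    group
  have hF := F.2.1 c₁ z
  rw [hc] at hF
  have hfix : z • fpt G X t₀ p c₂ h₂ = fpt G X t₀ p c₁ h₁ := by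
    apply Subtype.ext
    show (c₁⁻¹ * c₂) • (c₂⁻¹ • ((p : TorsionFix G X) : X × G).1)
        = c₁⁻¹ • ((p : TorsionFix G X) : X × G).1
    rw [smul_smul]
    congr 1
    group
  calc ((F : G → ↥(cslc k (FixedPts G X t₀))) c₁ : FixedPts G X t₀ → k) (fpt G X t₀ p c₁ h₁)
      = ((F : G → ↥(cslc k (FixedPts G X t₀))) c₁ : FixedPts G X t₀ → k)
          ((z⁻¹)⁻¹ • fpt G X t₀ p c₂ h₂) := by rw [inv_inv, hfix]
    _ = ((F : G → ↥(cslc k (FixedPts G X t₀))) c₂ : FixedPts G X t₀ → k)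
          (fpt G X t₀ p c₂ h₂) := by rw [hF]; rfl

lemma bwdF_lc
    (F : ↥(indCarrier k G (Subgroup.centralizer ({t₀} : Set G)) (↥(cslc k (FixedPts G X t₀)))
        (permRep k (↥(Subgroup.centralizer ({t₀} : Set G))) (FixedPts G X t₀)))) :
    IsLocallyConstant (bwdF k G X t₀ F) := by
  rw [IsLocallyConstant.iff_exists_open]
  intro p
  have hcs := chC_spec G t₀ p.2
  obtain ⟨V, hVo, hxV, hVc⟩ :=
    ((F : G → ↥(cslc k (FixedPts G X t₀))) (chC G t₀ ((p : TorsionFix G X) : X × G).2)).2.1.exists_open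
      (fpt G X t₀ p _ hcs)
  obtain ⟨W, hWo, hVW⟩ := isOpen_induced_iff.mp hVo
  refine ⟨{q : ClassPart G X t₀ |
      ((q : TorsionFix G X) : X × G).2 = ((p : TorsionFix G X) : X × G).2
      ∧ (chC G t₀ ((p : TorsionFix G X) : X × G).2)⁻¹ • ((q : TorsionFix G X) : X × G).1 ∈ W},
    ?_, ⟨rfl, ?_⟩, ?_⟩
  · have h1 : IsOpen ((fun q : ClassPart G X t₀ => ((q : TorsionFix G X) : X × G).2) ⁻¹'
        {h : G | h = ((p : TorsionFix G X) : X × G).2}) :=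
      (isOpen_discrete _).preimage
        (continuous_snd.comp (continuous_subtype_val.comp continuous_subtype_val))
    have h2 : IsOpen ((fun q : ClassPart G X t₀ =>
        (chC G t₀ ((p : TorsionFix G X) : X × G).2)⁻¹ • ((q : TorsionFix G X) : X × G).1) ⁻¹'
          W) :=
      hWo.preimage (((continuous_fst.comp
        (continuous_subtype_val.comp continuous_subtype_val))).const_smul _)
    exact h1.inter h2
  · have := hxV
    rw [← hVW] at this
    exact this
  · rintro q ⟨hq1, hq2⟩
    have hcq : chC G t₀ ((p : TorsionFix G X) : X × G).2 * t₀
        * (chC G t₀ ((p : TorsionFix G X) : X × G).2)⁻¹ = ((q : TorsionFix G X) : X × G).2 :=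
      hcs.trans hq1.symm
    have step1 : bwdF k G X t₀ F q
        = ((F : G → ↥(cslc k (FixedPts G X t₀)))
            (chC G t₀ ((p : TorsionFix G X) : X × G).2) : FixedPts G X t₀ → k)
          (fpt G X t₀ q _ hcq) :=
      bwd_wd k G X t₀ F q _ _ (chC_spec G t₀ q.2) hcq
    rw [step1]
    have hmemV : fpt G X t₀ q _ hcq ∈ V := by
      rw [← hVW]
      exact hq2
    exact hVc _ hmemV

lemma bwdF_cs (ht : IsOfFinOrder t₀)
    (F : ↥(indCarrier k G (Subgroup.centralizer ({t₀} : Set G)) (↥(cslc k (FixedPts G X t₀)))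
        (permRep k (↥(Subgroup.centralizer ({t₀} : Set G))) (FixedPts G X t₀)))) :
    HasCompactSupport (bwdF k G X t₀ F) := by
  have hD' : Set.Finite {h : G | IsConj t₀ h
      ∧ (F : G → ↥(cslc k (FixedPts G X t₀))) (chC G t₀ h) ≠ 0} := by
    refine Set.Finite.of_finite_image (f := fun h => (QuotientGroup.mk (chC G t₀ h) :
      G ⧸ Subgroup.centralizer ({t₀} : Set G))) (F.2.2.subset ?_) ?_
    · rintro _ ⟨h, hh, rfl⟩
      exact ⟨chC G t₀ h, hh.2, rfl⟩
    · intro h₁ hh₁ h₂ hh₂ heq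
      have e1 := congrArg (conjQ G t₀) heq
      simp only [conjQ_mk, chC_spec G t₀ hh₁.1, chC_spec G t₀ hh₂.1] at e1
      exact e1
  have hC : IsCompact (⋃ h ∈ {h : G | IsConj t₀ h
      ∧ (F : G → ↥(cslc k (FixedPts G X t₀))) (chC G t₀ h) ≠ 0},
      (fun x => pt G X t₀ ht (chC G t₀ h) x) ''
        tsupport ((F : G → ↥(cslc k (FixedPts G X t₀))) (chC G t₀ h) : FixedPts G X t₀ → k)) :=
    hD'.isCompact_biUnion fun h _ =>
      (((F : G → ↥(cslc k (FixedPts G X t₀))) (chC G t₀ h)).2.2).image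
        (pt_continuous G X t₀ ht _)
  refine IsCompact.of_isClosed_subset hC isClosed_closure (closure_minimal ?_ hC.isClosed)
  intro q hq
  rw [mem_support] at hq
  have hconj : IsConj t₀ ((q : TorsionFix G X) : X × G).2 := q.2
  have hne : (F : G → ↥(cslc k (FixedPts G X t₀)))
      (chC G t₀ ((q : TorsionFix G X) : X × G).2) ≠ 0 := by
    intro h0
    apply hq
    show ((F : G → ↥(cslc k (FixedPts G X t₀)))
      (chC G t₀ ((q : TorsionFix G X) : X × G).2) : FixedPts G X t₀ → k) _ = 0
    rw [h0]
    rfl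
  refine Set.mem_biUnion (show ((q : TorsionFix G X) : X × G).2 ∈ _ from ⟨hconj, hne⟩) ?_
  exact ⟨fpt G X t₀ q _ (chC_spec G t₀ hconj), subset_closure hq, pt_fpt G X t₀ ht q _ _⟩

/-- The backward map `Ind_{Z(t₀)}^G k[X^{t₀}] → k[X̂_c]`. -/
noncomputable def bwdL (ht : IsOfFinOrder t₀) :
    ↥(indCarrier k G (Subgroup.centralizer ({t₀} : Set G)) (↥(cslc k (FixedPts G X t₀)))
        (permRep k (↥(Subgroup.centralizer ({t₀} : Set G))) (FixedPts G X t₀)))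
      →ₗ[k] ↥(cslc k (ClassPart G X t₀)) where
  toFun F := ⟨bwdF k G X t₀ F, ⟨bwdF_lc k G X t₀ F, bwdF_cs k G X t₀ ht F⟩⟩
  map_add' F₁ F₂ := Subtype.ext (funext fun q => rfl)
  map_smul' c F := Subtype.ext (funext fun q => rfl)

lemma indIso (ht : IsOfFinOrder t₀) :
    ∃ e : ↥(cslc k (ClassPart G X t₀)) ≃ₗ[k]
        ↥(indCarrier k G (Subgroup.centralizer ({t₀} : Set G))
          (↥(cslc k (FixedPts G X t₀)))
          (permRep k ↥(Subgroup.centralizer ({t₀} : Set G)) (FixedPts G X t₀))),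
      ∀ (h : G) (f : ↥(cslc k (ClassPart G X t₀))),
        e (permRep k G (ClassPart G X t₀) h f)
          = indRep k G (Subgroup.centralizer ({t₀} : Set G))
              (↥(cslc k (FixedPts G X t₀)))
              (permRep k ↥(Subgroup.centralizer ({t₀} : Set G)) (FixedPts G X t₀))
              h (e f) := by
  refine ⟨LinearEquiv.ofLinear (fwdL k G X t₀ ht) (bwdL k G X t₀ ht) ?_ ?_, ?_⟩
  · -- fwdL ∘ bwdL = id
    apply LinearMap.ext
    intro F
    apply Subtype.ext
    funext g
    apply Subtype.ext
    funext x
    have h₂ : g * t₀ * g⁻¹ = ((pt G X t₀ ht g x : TorsionFix G X) : X × G).2 := rfl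
    show bwdF k G X t₀ F (pt G X t₀ ht g x)
        = ((F : G → ↥(cslc k (FixedPts G X t₀))) g : FixedPts G X t₀ → k) x
    calc bwdF k G X t₀ F (pt G X t₀ ht g x)
        = ((F : G → ↥(cslc k (FixedPts G X t₀))) g : FixedPts G X t₀ → k)
            (fpt G X t₀ (pt G X t₀ ht g x) g h₂) :=
          bwd_wd k G X t₀ F _ _ g (chC_spec G t₀ (pt G X t₀ ht g x).2) h₂
      _ = ((F : G → ↥(cslc k (FixedPts G X t₀))) g : FixedPts G X t₀ → k) x := by
          rw [fpt_pt]
  · -- bwdL ∘ fwdL = id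
    apply LinearMap.ext
    intro f
    apply Subtype.ext
    funext q
    show ((fwdL k G X t₀ ht f : G → ↥(cslc k (FixedPts G X t₀)))
        (chC G t₀ ((q : TorsionFix G X) : X × G).2) : FixedPts G X t₀ → k)
          (fpt G X t₀ q _ (chC_spec G t₀ q.2))
      = (f : ClassPart G X t₀ → k) q
    show (f : ClassPart G X t₀ → k)
        (pt G X t₀ ht (chC G t₀ ((q : TorsionFix G X) : X × G).2)
          (fpt G X t₀ q _ (chC_spec G t₀ q.2)))
      = (f : ClassPart G X t₀ → k) q
    rw [pt_fpt]
  · intro h f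
    apply Subtype.ext
    funext g
    apply Subtype.ext
    funext x
    show (f : ClassPart G X t₀ → k) (h⁻¹ • pt G X t₀ ht g x)
        = (f : ClassPart G X t₀ → k) (pt G X t₀ ht (h⁻¹ * g) x)
    rw [pt_smul]

end AuxInd2

open DirectSum in
theorem torsion_part_decomposition_and_induction
    (G : Type u) [Group G] [TopologicalSpace G] [DiscreteTopology G]
    (X : Type u) [TopologicalSpace X] [MulAction G X] [ContinuousConstSMul G X]
    [TotallyDisconnectedSpace X] [LocallyCompactSpace X] [T2Space X]
    (T : Set G) (hT₁ : ∀ t ∈ T, IsOfFinOrder t)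
    (hT₂ : ∀ g : G, IsOfFinOrder g → ∃! t, t ∈ T ∧ IsConj t g) :
    -- (1a): each X̂_c is open, closed and G-invariant in X̂
    (∀ t : G, IsOfFinOrder t →
      (IsOpen {p : TorsionFix G X | IsConj t (p : X × G).2} ∧
       IsClosed {p : TorsionFix G X | IsConj t (p : X × G).2} ∧
       (∀ (h : G) (p : TorsionFix G X), IsConj t (p : X × G).2 →
         IsConj t ((h • p : TorsionFix G X) : X × G).2))) ∧
    -- (1b): restriction to the parts X̂_c gives an equivariant isomorphism
    -- k[X̂] ≅ ⊕_c k[X̂_c]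
    (∃ E : ↥(cslc k (TorsionFix G X)) ≃ₗ[k]
        (⨁ (t : T), ↥(cslc k (ClassPart G X (t : G)))),
      (∀ (h : G) (f : ↥(cslc k (TorsionFix G X))) (t : T),
        (E (permRep k G (TorsionFix G X) h f)) t
          = permRep k G (ClassPart G X (t : G)) h ((E f) t)) ∧
      (∀ (f : ↥(cslc k (TorsionFix G X))) (t : T) (p : ClassPart G X (t : G)),
        (((E f) t : ↥(cslc k (ClassPart G X (t : G)))) : ClassPart G X (t : G) → k) p
          = (f : TorsionFix G X → k) (p : TorsionFix G X))) ∧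
    -- (2): k[X̂_c] ≅ Ind_{Z(t)}^G k[X^t] equivariantly, for the representative t of c
    (∀ t : T, ∃ e : ↥(cslc k (ClassPart G X (t : G))) ≃ₗ[k]
        ↥(indCarrier k G (Subgroup.centralizer ({(t : G)} : Set G))
          (↥(cslc k (FixedPts G X (t : G))))
          (permRep k ↥(Subgroup.centralizer ({(t : G)} : Set G)) (FixedPts G X (t : G)))),
      ∀ (h : G) (f : ↥(cslc k (ClassPart G X (t : G)))),
        e (permRep k G (ClassPart G X (t : G)) h f)
          = indRep k G (Subgroup.centralizer ({(t : G)} : Set G))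
              (↥(cslc k (FixedPts G X (t : G))))
              (permRep k ↥(Subgroup.centralizer ({(t : G)} : Set G)) (FixedPts G X (t : G)))
              h (e f)) := by
  classical
  refine ⟨?_, ?_, ?_⟩
  · intro t _
    exact ⟨classSet_isOpen G X t, classSet_isClosed G X t,
      fun h p hp => hp.trans (isConj_iff.mpr ⟨h, rfl⟩)⟩
  · have hbij : Function.Bijective (Phi k G X T) := by
      constructor
      · intro w₁ w₂ hw
        refine DFinsupp.ext fun t => ?_
        apply Subtype.ext
        funext p
        obtain ⟨pv, hp⟩ := p
        have h1 := Phi_eval k G X T hT₂ w₁ t pv hp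
        have h2 := Phi_eval k G X T hT₂ w₂ t pv hp
        rw [hw] at h1
        exact h1.symm.trans h2
      · intro f
        have hfin := rest_finite k G X T hT₂ f
        refine ⟨DFinsupp.mk (β := fun t : ↥T => ↥(cslc k (ClassPart G X (t : G))))
          hfin.toFinset (fun t => restMap k G X ((t : ↥T) : G) f), ?_⟩
        have hcomp : ∀ t : T, DFinsupp.mk (β := fun t : ↥T => ↥(cslc k (ClassPart G X (t : G))))
            hfin.toFinset (fun t => restMap k G X ((t : ↥T) : G) f) t
              = restMap k G X (t : G) f := by
          intro t
          rw [DFinsupp.mk_apply]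
          split
          · rfl
          · next hnot =>
            exact (not_not.mp fun hne => hnot (hfin.mem_toFinset.mpr hne)).symm
        apply Subtype.ext
        funext q
        obtain ⟨t, ⟨htT, htc⟩, -⟩ := hT₂ (q : X × G).2 q.2.1
        rw [Phi_eval k G X T hT₂ _ ⟨t, htT⟩ q htc, hcomp ⟨t, htT⟩]
        rfl
    set E := (LinearEquiv.ofBijective (Phi k G X T) hbij).symm with hE
    have hpoint : ∀ (f : ↥(cslc k (TorsionFix G X))) (t : T) (p : ClassPart G X (t : G)),
        (((E f) t : ↥(cslc k (ClassPart G X (t : G)))) : ClassPart G X (t : G) → k) p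
          = (f : TorsionFix G X → k) (p : TorsionFix G X) := by
      intro f t p
      obtain ⟨pv, hp⟩ := p
      have h0 : Phi k G X T (E f) = f :=
        (LinearEquiv.ofBijective (Phi k G X T) hbij).apply_symm_apply f
      have h1 := Phi_eval k G X T hT₂ (E f) t pv hp
      rw [h0] at h1
      exact h1.symm
    refine ⟨E, ?_, hpoint⟩
    intro h f t
    apply Subtype.ext
    funext p
    have l1 := hpoint (permRep k G (TorsionFix G X) h f) t p
    have l2 := hpoint f t (h⁻¹ • p)
    rw [l1]
    show (f : TorsionFix G X → k) (h⁻¹ • (p : TorsionFix G X))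
        = ((E f) t : ClassPart G X (t : G) → k) (h⁻¹ • p)
    rw [l2]
    rfl
  · intro t
    exact indIso k G X (t : G) (hT₁ t t.2)
end

section
/- Let G be a group, k a commutative unital ring, and S a G-set such that for every s ∈ S the stabilizer G_s = {g ∈ G : g·s = s} is finite and its order |G_s| is invertible in k. Then the permutation module k[S] — the k-module of finitely supported functions S → k, with G acting by (g·f)(s) = f(g^{-1}·s) — is projective as a module over the group algebra k[G]. -/
open MulAction Finsupp

section Aux

variable {k : Type*} [CommRing k] {G : Type*} [Group G] {S : Type*} [MulAction G S]

/-- The sum of the elements of the stabilizer of `t`, in the group algebra. -/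
noncomputable def stabSum (k : Type*) [CommRing k] (G : Type*) [Group G] {S : Type*}
    [MulAction G S] (t : S) [Fintype (stabilizer G t)] : MonoidAlgebra k G :=
  ∑ h : stabilizer G t, MonoidAlgebra.single (h : G) 1

theorem single_mul_stabSum {t : S} [Fintype (stabilizer G t)] {a b : G}
    (h : a • t = b • t) :
    MonoidAlgebra.single a (1 : k) * stabSum k G t
      = MonoidAlgebra.single b 1 * stabSum k G t := by
  have mem : b⁻¹ * a ∈ stabilizer G t := by
    rw [mem_stabilizer_iff, mul_smul, h, inv_smul_smul]
  unfold stabSum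
  rw [Finset.mul_sum, Finset.mul_sum]
  refine Fintype.sum_equiv (Equiv.mulLeft (⟨b⁻¹ * a, mem⟩ : stabilizer G t)) _ _ ?_
  intro x
  rw [MonoidAlgebra.single_mul_single, MonoidAlgebra.single_mul_single, one_mul]
  congr 1
  push_cast [Equiv.coe_mulLeft]
  group

theorem stabSum_apply_single (t : S) [Fintype (stabilizer G t)] :
    (Representation.ofMulAction k G S).asAlgebraHom (stabSum k G t) (MonoidAlgebra.single t 1)
      = (Nat.card (stabilizer G t) : k) • MonoidAlgebra.single t 1 := by
  unfold stabSum
  rw [map_sum, LinearMap.coe_sum, Finset.sum_apply]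
  have : ∀ h : stabilizer G t,
      (Representation.ofMulAction k G S).asAlgebraHom (MonoidAlgebra.single (h : G) 1)
        (MonoidAlgebra.single t 1) = MonoidAlgebra.single t (1 : k) := by
    intro h
    rw [Representation.asAlgebraHom_single_one, Representation.ofMulAction_single, h.2]
  rw [Finset.sum_congr rfl fun h _ => this h, Finset.sum_const, Finset.card_univ,
    Nat.cast_smul_eq_nsmul, Nat.card_eq_fintype_card]

end Aux

theorem permutation_module_projective
    (k : Type*) [CommRing k] (G : Type*) [Group G] (S : Type*) [MulAction G S]
    (hfin : ∀ s : S, Finite (MulAction.stabilizer G s))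
    (hinv : ∀ s : S, IsUnit ((Nat.card (MulAction.stabilizer G s) : k))) :
    Module.Projective (MonoidAlgebra k G) (Representation.ofMulAction k G S).asModule := by
  classical
  letI : ∀ s : S, Fintype (stabilizer G s) := fun s => @Fintype.ofFinite _ (hfin s)
  let A := MonoidAlgebra k G
  let ρ := Representation.ofMulAction k G S
  let P := ρ.asModule
  -- the averaging idempotent-ish element for the stabilizer of `t`
  let e : S → A := fun t => (((hinv t).unit⁻¹ : kˣ) : k) • stabSum k G t
  -- orbit representatives
  let r : S → S := fun s => (Quotient.mk (orbitRel G S) s).out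
  have hr : ∀ (g : G) (s : S), r (g • s) = r s := by
    intro g s
    show (Quotient.mk (orbitRel G S) (g • s)).out = (Quotient.mk (orbitRel G S) s).out
    congr 1
    exact Quotient.sound (orbitRel_apply.mpr ⟨g, rfl⟩)
  have hrs : ∀ s : S, ∃ g : G, g • r s = s := by
    intro s
    obtain ⟨g, hg⟩ := orbitRel_apply.mp (Quotient.mk_out (s := orbitRel G S) s)
    have hg' : g • s = r s := hg
    exact ⟨g⁻¹, by rw [← hg', inv_smul_smul]⟩
  let c : S → G := fun s => (hrs s).choose
  have hc : ∀ s, c s • r s = s := fun s => (hrs s).choose_spec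
  -- the section, defined on basis vectors
  let σ₀ : S → (S →₀ A) := fun s =>
    Finsupp.single (r s) (MonoidAlgebra.single (c s) 1 * e (r s))
  have hσ₀ : ∀ (g : G) (s : S), σ₀ (g • s) = MonoidAlgebra.single g (1 : k) • σ₀ s := by
    intro g s
    show Finsupp.single (r (g • s)) (MonoidAlgebra.single (c (g • s)) 1 * e (r (g • s)))
      = MonoidAlgebra.single g (1 : k) • Finsupp.single (r s) (MonoidAlgebra.single (c s) 1 * e (r s))
    rw [Finsupp.smul_single, hr g s]
    congr 1
    rw [smul_eq_mul, ← mul_assoc, MonoidAlgebra.single_mul_single, one_mul]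
    show MonoidAlgebra.single (c (g • s)) (1:k) * ((((hinv (r s)).unit⁻¹ : kˣ) : k) • stabSum k G (r s)) = _
    rw [mul_smul_comm, mul_smul_comm]
    congr 1
    refine single_mul_stabSum ?_
    have h1 : c (g • s) • r s = g • s := by rw [← hr g s]; exact hc (g • s)
    rw [h1, mul_smul, hc s]
  let σk : MonoidAlgebra k S →ₗ[k] (S →₀ A) :=
    Finsupp.linearCombination k σ₀ ∘ₗ (MonoidAlgebra.coeffLinearEquiv k).toLinearMap
  have σk_single : ∀ (s : S) (b : k), σk (MonoidAlgebra.single s b) = b • σ₀ s := by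
    intro s b
    simp only [σk, LinearMap.comp_apply, LinearEquiv.coe_coe,
      MonoidAlgebra.coeffLinearEquiv_apply, MonoidAlgebra.coeff_single,
      Finsupp.linearCombination_single]
  -- σk is A-linear
  have key_smul : ∀ (a : A) (x : P), σk (a • x) = a • σk x := by
    intro a x
    induction a using MonoidAlgebra.induction_on with
    | of g =>
      show σk (ρ.asAlgebraHom (MonoidAlgebra.of k G g) x) = _
      rw [Representation.asAlgebraHom_of]
      induction x using MonoidAlgebra.induction_linear with
      | zero => simp
      | add f1 f2 h1 h2 =>
          rw [map_add, map_add, h1, h2, map_add, smul_add]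
      | single s b =>
          rw [Representation.ofMulAction_single, σk_single, σk_single, hσ₀ g s,
            MonoidAlgebra.of_apply, smul_comm]
    | add p q hp hq =>
      have : (p + q) • x = p • x + q • x := add_smul p q x
      rw [this, show σk (p • x + q • x) = σk (p • x) + σk (q • x) from map_add σk _ _, hp, hq,
        add_smul]
    | smul b p hp =>
      have h1 : (b • p) • x = b • (p • x) := by
        show ρ.asAlgebraHom (b • p) x = _
        rw [map_smul]
        rfl
      rw [h1, show σk (b • (p • x)) = b • σk (p • x) from map_smul σk _ _, hp, smul_assoc]
  let σ : P →ₗ[A] (S →₀ A) :=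
    { toFun := σk, map_add' := map_add σk, map_smul' := key_smul }
  let π : (S →₀ A) →ₗ[A] P :=
    Finsupp.linearCombination A (fun s => (show P from MonoidAlgebra.single s 1))
  have hπσ : ∀ x : P, π (σ x) = x := by
    intro x
    induction x using MonoidAlgebra.induction_linear with
    | zero => exact (congrArg π (map_zero σ)).trans (map_zero π)
    | add f1 f2 h1 h2 =>
      exact (congrArg π (map_add σ (show P from f1) (show P from f2))).trans
        ((map_add π _ _).trans (congrArg₂ (· + ·) h1 h2))
    | single s b =>
      show π (σk (MonoidAlgebra.single s b)) = _
      rw [σk_single]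
      have : (b • σ₀ s : S →₀ A)
          = Finsupp.single (r s) (MonoidAlgebra.single (c s) b * e (r s)) := by
        rw [Finsupp.smul_single]
        congr 1
        rw [show MonoidAlgebra.single (c s) b = b • MonoidAlgebra.single (c s) (1 : k) by
          rw [MonoidAlgebra.smul_single', mul_one], smul_mul_assoc]
      rw [this]
      show (Finsupp.linearCombination A (fun s => (show P from MonoidAlgebra.single s 1)))
        (Finsupp.single (r s) (MonoidAlgebra.single (c s) b * e (r s))) = _
      erw [Finsupp.linearCombination_single]
      show ρ.asAlgebraHom (MonoidAlgebra.single (c s) b * e (r s)) (MonoidAlgebra.single (r s) 1)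
        = MonoidAlgebra.single s b
      rw [map_mul]
      have he : ρ.asAlgebraHom (e (r s)) (MonoidAlgebra.single (r s) 1)
          = MonoidAlgebra.single (r s) 1 := by
        show ρ.asAlgebraHom ((((hinv (r s)).unit⁻¹ : kˣ) : k) • stabSum k G (r s)) _ = _
        rw [map_smul, LinearMap.smul_apply, stabSum_apply_single, smul_smul]
        have hone : ((((hinv (r s)).unit⁻¹ : kˣ) : k)
            * (Nat.card (stabilizer G (r s)) : k)) = 1 := by
          exact (hinv (r s)).val_inv_mul
        rw [hone, one_smul]
      rw [Module.End.mul_apply, he, Representation.asAlgebraHom_single,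
        LinearMap.smul_apply, Representation.ofMulAction_single, hc s,
        MonoidAlgebra.smul_single, smul_eq_mul, mul_one]
  exact Module.Projective.of_split σ π (LinearMap.ext hπσ)
end

section
/- Let a group G act on a set V₀, and let Y be a G-invariant abstract simplicial complex on V₀, i.e., a collection of nonempty finite subsets of V₀ (called simplices) that is closed under passing to nonempty subsets and is invariant under the induced G-action on subsets. Suppose that every G-orbit in V₀ intersects each simplex of Y in at most one element. Then there exists a G-invariant partial order on V₀ whose restriction to each simplex of Y is a linear order (that is, Y admits a G-orientation). -/
/-!
STATEMENT 11: If a group G acts on the vertex set of a G-invariant abstract simplicial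
complex Y in such a way that every G-orbit meets each simplex in at most one element,
then Y admits a G-orientation: a G-invariant partial order on the vertex set whose
restriction to each simplex is a linear order.
-/

theorem exists_G_orientation
    (G V₀ : Type*) [Group G] [MulAction G V₀] [DecidableEq V₀]
    (Y : Set (Finset V₀))
    (hne : ∀ σ ∈ Y, σ.Nonempty)
    (hdown : ∀ σ ∈ Y, ∀ τ : Finset V₀, τ ⊆ σ → τ.Nonempty → τ ∈ Y)
    (hGinv : ∀ (g : G), ∀ σ ∈ Y, σ.image (g • ·) ∈ Y)
    (horb : ∀ σ ∈ Y, ∀ v ∈ σ, ∀ w ∈ σ, (∃ g : G, g • v = w) → v = w) :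
    ∃ r : V₀ → V₀ → Prop, IsPartialOrder V₀ r ∧
      (∀ (g : G) (v w : V₀), r v w → r (g • v) (g • w)) ∧
      (∀ σ ∈ Y, ∀ v ∈ σ, ∀ w ∈ σ, r v w ∨ r w v) := by
  -- the orbit map into the quotient
  let q : V₀ → Quotient (MulAction.orbitRel G V₀) := Quotient.mk _
  -- a well-order on the quotient
  let lt : Quotient (MulAction.orbitRel G V₀) → Quotient (MulAction.orbitRel G V₀) → Prop :=
    WellOrderingRel
  have inst : IsWellOrder _ lt := WellOrderingRel.isWellOrder
  have htrans : ∀ {a b c}, lt a b → lt b c → lt a c := fun h1 h2 => by haveI := inst; exact trans_of lt h1 h2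
  haveI := inst
  have hirr : ∀ a, ¬ lt a a := fun a => irrefl_of lt a
  have htri : ∀ a b, lt a b ∨ a = b ∨ lt b a := by haveI := inst; exact trichotomous_of lt
  -- orbit is G-invariant
  have hq : ∀ (g : G) (v : V₀), q (g • v) = q v := by
    intro g v
    exact Quotient.sound ⟨g, rfl⟩
  refine ⟨fun v w => v = w ∨ lt (q v) (q w), ?_, ?_, ?_⟩
  · refine { refl := fun v => Or.inl rfl, trans := ?_, antisymm := ?_ }
    · rintro a b c (rfl | h1) (rfl | h2)
      · exact Or.inl rfl
      · exact Or.inr h2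
      · exact Or.inr h1
      · exact Or.inr (htrans h1 h2)
    · rintro a b (rfl | h1) h2
      · rfl
      · rcases h2 with rfl | h2
        · rfl
        · exact absurd (htrans h1 h2) (hirr _)
  · rintro g v w (rfl | h)
    · exact Or.inl rfl
    · exact Or.inr (by rwa [hq, hq])
  · intro σ hσ v hv w hw
    rcases htri (q v) (q w) with h | h | h
    · exact Or.inl (Or.inr h)
    · left; left
      obtain ⟨g, hg⟩ := Quotient.exact h
      exact horb σ hσ v hv w hw ⟨g⁻¹, by rw [← hg, inv_smul_smul]⟩
    · exact Or.inr (Or.inr h)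
end
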